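/- Let ρ : [0,∞) → ℝ be the Dickman function, i.e., the unique continuous function with ρ(u) = 1 for 0 ≤ u ≤ 1 that is differentiable on (1,∞) and satisfies u·ρ′(u) = −ρ(u−1) for all u > 1. Then for all integers 1 ≤ m ≤ n, ρ(n/m) ≤ ν(n,m) ≤ ρ((n+1)/(m+1)). -/

import Mathlib

open Finset

/-- The number of cycles of length `j` in the permutation `σ` of `{1,…,n}`
(fixed points count as cycles of length 1): the number of points whose
orbit under `σ` has size `j`, divided by `j`. -/
noncomputable def cycleCount {n : ℕ} (σ : Equiv.Perm (Fin n)) (j : ℕ) : ℕ :=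
  (Finset.univ.filter fun x => Function.minimalPeriod (⇑σ) x = j).card / j

/-- The number of cycles of `σ` whose length lies in the set `I`. -/
noncomputable def cycleCountIn {n : ℕ} (σ : Equiv.Perm (Fin n)) (I : Finset ℕ) : ℕ :=
  ∑ j ∈ I, cycleCount σ j

/-- The total number of cycles of `σ` (fixed points included as 1-cycles). -/
noncomputable def totalCycles {n : ℕ} (σ : Equiv.Perm (Fin n)) : ℕ :=
  cycleCountIn σ (Finset.Icc 1 n)

/-- Probability of an event under a uniformly random permutation of `{1,…,n}`. -/
noncomputable def permP (n : ℕ) (E : Equiv.Perm (Fin n) → Prop) : ℝ :=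
  (Nat.card {σ : Equiv.Perm (Fin n) // E σ} : ℝ) / n.factorial

/-- Expectation of `f` under a uniformly random permutation of `{1,…,n}`. -/
noncomputable def permE (n : ℕ) (f : Equiv.Perm (Fin n) → ℝ) : ℝ :=
  (∑ σ : Equiv.Perm (Fin n), f σ) / n.factorial

/-- `H(I) = ∑_{j ∈ I} 1/j`. -/
noncomputable def Hset (I : Finset ℕ) : ℝ := ∑ j ∈ I, (1 : ℝ) / j

/-- The harmonic sum `H_n = ∑_{i=1}^n 1/i`. -/
noncomputable def harm (n : ℕ) : ℝ := Hset (Finset.Icc 1 n)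

/-!
Fix a point of `{1,…,n}`. A permutation all of whose cycles have length at most `m` is the
cycle through that point, of some length `j ≤ m` and chosen in `(n-1)!/(n-j)!` ways, together
with such a permutation of the remaining `n - j` points. Hence `ν(n,m) = 1` for `n ≤ m` and
`n ν(n,m) = ∑_{k=n-m}^{n-1} ν(k,m)` for `n > m`.

The delay equation integrates to `u ρ(u) = ∫_{u-1}^u ρ`, which forces `ρ` to be nonnegative and
nonincreasing; rescaled, `x ρ(x/c) = ∫_{x-c}^x ρ(s/c) ds`. For `c = m`, `x = n` the left Riemann
sum of this decreasing integrand bounds `n ρ(n/m)` by `∑_{k=n-m}^{n-1} ρ(k/m)`; for `c = m + 1`,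
`x = n + 1` the right Riemann sum bounds `∑_{k=n-m}^{n} ρ((k+1)/(m+1))` by `(n+1) ρ((n+1)/(m+1))`.
Strong induction on `n` through the recurrence gives both bounds.
-/

open Function Equiv

theorem Function.Semiconj.minimalPeriod_eq {α β : Type*} {f : α → α} {g : β → β} {e : α → β}
    (he : Injective e) (h : Semiconj e f g) (x : α) :
    minimalPeriod g (e x) = minimalPeriod f x := by
  rw [minimalPeriod_eq_minimalPeriod_iff]
  intro n
  rw [IsPeriodicPt, IsFixedPt, IsPeriodicPt, IsFixedPt, ← h.iterate_right n x, he.eq_iff]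

theorem Function.minimalPeriod_eq_length {α : Type*} {f : α → α} {x : α} {L : List α}
    (hL : L.Nodup) (hpos : 0 < L.length) (h : ∀ n, f^[n] x = L[n % L.length]'(Nat.mod_lt _ hpos)) :
    minimalPeriod f x = L.length := by
  have hx : x = L[0] := by simpa [Nat.zero_mod] using h 0
  refine Nat.dvd_right_iff_eq.mp fun n => ?_
  rw [← isPeriodicPt_iff_minimalPeriod_dvd, IsPeriodicPt, IsFixedPt, h n]
  conv_lhs => rhs; rw [hx]
  rw [hL.getElem_inj_iff, Nat.dvd_iff_mod_eq_zero]

theorem card_injective_forall_ne {α : Type*} [Fintype α] [DecidableEq α] (x₀ : α) (k : ℕ) :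
    #{w : Fin k → α | Injective w ∧ ∀ i, w i ≠ x₀} = (Fintype.card α - 1).descFactorial k := by
  let e : {w : Fin k → α // Injective w ∧ ∀ i, w i ≠ x₀} ≃ (Fin k ↪ {y : α // y ≠ x₀}) :=
    { toFun := fun w => ⟨fun i => ⟨w.1 i, w.2.2 i⟩, fun _ _ h => w.2.1 (congrArg Subtype.val h)⟩
      invFun := fun f => ⟨fun i => f i, fun _ _ h => f.injective (Subtype.ext h), fun i => (f i).2⟩
      left_inv := fun _ => rfl
      right_inv := fun _ => rfl }
  rw [← Fintype.card_subtype, Fintype.card_congr e, Fintype.card_embedding_eq]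
  simp [Fintype.card_subtype_compl]

namespace Equiv.Perm

theorem minimalPeriod_pos {α : Type*} [Finite α] (σ : Perm α) (x : α) : 0 < minimalPeriod σ x :=
  minimalPeriod_pos_of_mem_periodicPts (σ.injective.mem_periodicPts x)

theorem minimalPeriod_le_card_filter_minimalPeriod_eq {α : Type*} [Fintype α] (σ : Perm α) (x : α) :
    minimalPeriod σ x ≤ #{y | minimalPeriod σ y = minimalPeriod σ x} := by
  classical
  calc minimalPeriod σ x = #(range (minimalPeriod σ x)) := (card_range _).symm
    _ ≤ _ := by
      refine card_le_card_of_injOn (σ^[·] x) (fun i _ => ?_) ?_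
      · simpa using minimalPeriod_apply_iterate (σ.injective.mem_periodicPts x) i
      · simpa [Set.InjOn] using iterate_injOn_Iio_minimalPeriod (f := σ) (x := x)

end Equiv.Perm

def CyclesLE (m : ℕ) {α : Type*} (σ : Perm α) : Prop :=
  ∀ x, minimalPeriod σ x ≤ m

theorem cycleCountIn_Icc_eq_zero_iff {n m : ℕ} (σ : Perm (Fin n)) :
    cycleCountIn σ (Icc (m + 1) n) = 0 ↔ CyclesLE m σ := by
  simp only [cycleCountIn, cycleCount, sum_eq_zero_iff, mem_Icc, Nat.div_eq_zero_iff]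
  constructor
  · intro h x
    by_contra! hx
    have hle : minimalPeriod σ x ≤ n := by simpa using minimalPeriod_le_card (f := σ) (x := x)
    have := σ.minimalPeriod_le_card_filter_minimalPeriod_eq x
    have := σ.minimalPeriod_pos x
    have := h _ ⟨hx, hle⟩
    omega
  · intro h j hj
    right
    rw [filter_false_of_mem fun y _ => by have := h y; omega]
    simp only [card_empty]
    omega

theorem cyclesLE_permCongr_iff {α β : Type*} {m : ℕ} (e : α ≃ β) (σ : Perm α) :
    CyclesLE m (e.permCongr σ) ↔ CyclesLE m σ := by
  have hsemi : Semiconj e σ (e.permCongr σ) := fun x => by simp [permCongr_apply]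
  rw [CyclesLE, ← e.forall_congr_right]
  simp only [hsemi.minimalPeriod_eq e.injective, CyclesLE]

noncomputable def cyclesLECount (n m : ℕ) : ℕ :=
  Nat.card {σ : Perm (Fin n) // CyclesLE m σ}

theorem card_cyclesLE (α : Type*) [Fintype α] (m : ℕ) :
    Nat.card {σ : Perm α // CyclesLE m σ} = cyclesLECount (Fintype.card α) m :=
  Nat.card_congr <| (Fintype.equivFin α).permCongr.subtypeEquiv fun σ =>
    (cyclesLE_permCongr_iff _ σ).symm

theorem cyclesLECount_of_le {n m : ℕ} (h : n ≤ m) : cyclesLECount n m = n.factorial := by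
  have hall : ∀ σ : Perm (Fin n), CyclesLE m σ := fun σ x =>
    (minimalPeriod_le_card.trans_eq (Fintype.card_fin n)).trans h
  rw [cyclesLECount, Nat.card_congr (Equiv.subtypeUnivEquiv hall), Nat.card_perm,
    Nat.card_eq_fintype_card, Fintype.card_fin]

namespace Equiv.Perm

variable {α : Type*} [DecidableEq α] {σ : Perm α} {l : List α} {x₀ : α}

-- `l` lists a cycle of `σ` in order; `[x]` stands for a fixed point and `[]` for no condition.
def HasCycle (σ : Perm α) (l : List α) : Prop :=
  ∀ x ∈ l, σ x = l.formPerm x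

theorem HasCycle.apply_mem_iff (h : σ.HasCycle l) {x : α} : σ x ∈ l ↔ x ∈ l := by
  refine ⟨fun hx => ?_, fun hx => h x hx ▸ List.formPerm_apply_mem_of_mem hx⟩
  set z := l.formPerm.symm (σ x)
  have hz : z ∈ l := List.mem_of_formPerm_apply_mem (by simpa [z] using hx)
  have : σ z = σ x := by rw [h z hz, apply_symm_apply]
  exact σ.injective this ▸ hz

theorem HasCycle.iterate_apply (h : σ.HasCycle l) {x : α} (hx : x ∈ l) (k : ℕ) :
    σ^[k] x = (l.formPerm ^ k) x := by
  induction k with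
  | zero => rfl
  | succ k ih =>
    rw [iterate_succ_apply', ih, pow_succ', mul_apply,
      h _ (by simpa using List.form_perm_zpow_apply_mem_imp_mem l x hx k)]

theorem hasCycle_formPerm_mul (τ : Perm {x // x ∉ l}) : (l.formPerm * ofSubtype τ).HasCycle l :=
  fun x hx => by rw [mul_apply, ofSubtype_apply_of_not_mem τ (not_not.mpr hx)]

theorem cyclesLE_formPerm_mul {m : ℕ} (hl : l.Nodup) (hlm : l.length ≤ m)
    {τ : Perm {x // x ∉ l}} (hτ : CyclesLE m τ) : CyclesLE m (l.formPerm * ofSubtype τ) := by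
  intro x
  by_cases hx : x ∈ l
  · have hper : IsPeriodicPt (l.formPerm * ofSubtype τ) l.length x := by
      rw [IsPeriodicPt, IsFixedPt, (hasCycle_formPerm_mul τ).iterate_apply hx,
        l.formPerm_pow_length_eq_one_of_nodup hl, one_apply]
    exact (hper.minimalPeriod_le (List.length_pos_of_mem hx)).trans hlm
  · have hsemi : Semiconj Subtype.val τ (l.formPerm * ofSubtype τ) := fun y => by
      rw [mul_apply, ofSubtype_apply_of_mem τ y.2, List.formPerm_apply_of_notMem (τ y).2]
    exact (hsemi.minimalPeriod_eq Subtype.val_injective ⟨x, hx⟩).trans_le (hτ _)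

theorem HasCycle.cyclesLE_subtypePerm {m : ℕ} (hσ : CyclesLE m σ) (h : σ.HasCycle l) :
    CyclesLE m (σ.subtypePerm (p := fun x => x ∉ l) fun _ => not_congr h.apply_mem_iff) :=
  fun y => ((show Semiconj Subtype.val _ σ from fun _ => rfl).minimalPeriod_eq
    Subtype.val_injective y).symm.trans_le (hσ y)

def cyclesLEHasCycleEquiv {m : ℕ} (hl : l.Nodup) (hlm : l.length ≤ m) :
    {σ : Perm α // CyclesLE m σ ∧ σ.HasCycle l} ≃ {τ : Perm {x // x ∉ l} // CyclesLE m τ} where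
  toFun σ := ⟨_, σ.2.2.cyclesLE_subtypePerm σ.2.1⟩
  invFun τ := ⟨l.formPerm * ofSubtype τ.1, cyclesLE_formPerm_mul hl hlm τ.2,
    hasCycle_formPerm_mul τ.1⟩
  left_inv := by
    rintro ⟨σ, -, h⟩
    ext x
    by_cases hx : x ∈ l
    · rw [hasCycle_formPerm_mul _ x hx, h x hx]
    · rw [mul_apply, ofSubtype_apply_of_mem (p := fun x => x ∉ l) _ hx, subtypePerm_apply,
        List.formPerm_apply_of_notMem (mt h.apply_mem_iff.mp hx)]
  right_inv := by
    rintro ⟨τ, -⟩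
    ext x
    change l.formPerm (ofSubtype τ x) = τ x
    rw [ofSubtype_apply_of_mem τ x.2, List.formPerm_apply_of_notMem (τ x).2]

theorem card_cyclesLE_hasCycle [Fintype α] {m : ℕ} (hl : l.Nodup) (hlm : l.length ≤ m) :
    Nat.card {σ : Perm α // CyclesLE m σ ∧ σ.HasCycle l}
      = cyclesLECount (Fintype.card α - l.length) m := by
  rw [Nat.card_congr (cyclesLEHasCycleEquiv hl hlm), card_cyclesLE,
    Fintype.card_subtype_compl, Fintype.card_of_subtype l.toFinset (fun _ => List.mem_toFinset),
    List.toFinset_card_of_nodup hl]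

theorem hasCycle_cons_iff (hl : (x₀ :: l).Nodup) :
    σ.HasCycle (x₀ :: l) ↔
      ∀ n, σ^[n] x₀ = (x₀ :: l)[n % (l.length + 1)]'(Nat.mod_lt _ l.length.succ_pos) := by
  constructor
  · intro h n
    rw [h.iterate_apply List.mem_cons_self, List.formPerm_pow_apply_head _ _ hl]
    rfl
  · intro h x hx
    obtain ⟨i, hi, rfl⟩ := List.getElem_of_mem hx
    have hiter : (x₀ :: l)[i] = σ^[i] x₀ := by
      rw [h i]
      congr 1
      exact (Nat.mod_eq_of_lt hi).symm
    rw [List.formPerm_apply_getElem _ hl, hiter, ← iterate_succ_apply' σ, h]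
    rfl

theorem hasCycle_cons_ofFn_iff {k : ℕ} {w : Fin k → α} (hl : (x₀ :: List.ofFn w).Nodup) :
    σ.HasCycle (x₀ :: List.ofFn w) ↔
      minimalPeriod σ x₀ = k + 1 ∧ ∀ i : Fin k, σ^[i + 1] x₀ = w i := by
  rw [hasCycle_cons_iff hl]
  simp only [List.length_ofFn]
  constructor
  · intro h
    refine ⟨by simpa using minimalPeriod_eq_length hl (by simp) (by simpa using h), fun i => ?_⟩
    simp [h, Nat.mod_eq_of_lt (Nat.succ_lt_succ i.2)]
  · rintro ⟨hmp, hw⟩ n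
    have hlt : ∀ r (hr : r < k + 1), σ^[r] x₀ = (x₀ :: List.ofFn w)[r]'(by simpa using hr)
      | 0, _ => rfl
      | r + 1, hr => by simpa using hw ⟨r, by omega⟩
    rw [← iterate_mod_minimalPeriod_eq, hmp, hlt _ (Nat.mod_lt _ k.succ_pos)]

variable [Fintype α]

theorem card_cyclesLE_minimalPeriod_eq (x₀ : α) {m k : ℕ} (hkm : k + 1 ≤ m) :
    Nat.card {σ : Perm α // CyclesLE m σ ∧ minimalPeriod σ x₀ = k + 1}
      = (Fintype.card α - 1).descFactorial k * cyclesLECount (Fintype.card α - (k + 1)) m := by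
  classical
  set S : Finset (Perm α) := {σ | CyclesLE m σ ∧ minimalPeriod σ x₀ = k + 1}
  set W : Finset (Fin k → α) := {w | Injective w ∧ ∀ i, w i ≠ x₀}
  let F : Perm α → Fin k → α := fun σ i => σ^[i + 1] x₀
  have hmaps : ∀ σ ∈ S, F σ ∈ W := by
    intro σ hσ
    simp only [S, W, mem_filter, mem_univ, true_and] at hσ ⊢
    have hinj := iterate_injOn_Iio_minimalPeriod (f := σ) (x := x₀)
    rw [hσ.2] at hinj
    refine ⟨fun i j hij => Fin.ext ?_, fun i hi => ?_⟩
    · simpa using hinj (by simp) (by simp) hij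
    · simpa using hinj (by simp) (by simp) (hi.trans (iterate_zero_apply σ x₀).symm)
  have hfiber : ∀ w ∈ W, #{σ ∈ S | F σ = w} = cyclesLECount (Fintype.card α - (k + 1)) m := by
    intro w hw
    simp only [W, mem_filter, mem_univ, true_and] at hw
    have hl : (x₀ :: List.ofFn w).Nodup :=
      List.nodup_cons.mpr ⟨by simpa [List.mem_ofFn] using fun i => hw.2 i,
        List.nodup_ofFn.mpr hw.1⟩
    have hlen : (x₀ :: List.ofFn w).length = k + 1 := by simp
    rw [← hlen, ← card_cyclesLE_hasCycle hl (hlen ▸ hkm), Nat.card_eq_fintype_card,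
      Fintype.card_subtype]
    congr 1
    ext σ
    simp only [S, F, mem_filter, mem_univ, true_and, hasCycle_cons_ofFn_iff hl, funext_iff,
      and_assoc]
  rw [Nat.card_eq_fintype_card, Fintype.card_subtype, card_eq_sum_card_fiberwise hmaps,
    sum_congr rfl hfiber, sum_const, card_injective_forall_ne, smul_eq_mul]

end Equiv.Perm

theorem cyclesLECount_eq_sum {n : ℕ} (hn : 0 < n) (m : ℕ) :
    cyclesLECount n m = ∑ k ∈ range m, (n - 1).descFactorial k * cyclesLECount (n - (k + 1)) m := by
  classical
  let x₀ : Fin n := ⟨0, hn⟩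
  have hmaps : ∀ σ ∈ ({σ | CyclesLE m σ} : Finset (Perm (Fin n))),
      minimalPeriod σ x₀ - 1 ∈ range m := fun σ hσ => by
    simp only [mem_filter, mem_univ, true_and, mem_range] at hσ ⊢
    have hle := hσ x₀
    have hpos := σ.minimalPeriod_pos x₀
    omega
  rw [cyclesLECount, Nat.card_eq_fintype_card, Fintype.card_subtype,
    card_eq_sum_card_fiberwise hmaps]
  refine sum_congr rfl fun k hk => ?_
  have h := Perm.card_cyclesLE_minimalPeriod_eq x₀ (Nat.succ_le_of_lt (mem_range.mp hk))
  rw [Fintype.card_fin, Nat.card_eq_fintype_card, Fintype.card_subtype] at h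
  rw [← h, filter_filter]
  congr 1
  ext σ
  have hpos := σ.minimalPeriod_pos x₀
  simp only [mem_filter, mem_univ, true_and]
  exact and_congr_right fun _ => by omega

theorem permP_cyclesLE (n m : ℕ) :
    permP n (CyclesLE m) = cyclesLECount n m / n.factorial := rfl

theorem mul_permP_cyclesLE_eq_sum {n m : ℕ} (hmn : m < n) :
    n * permP n (CyclesLE m) = ∑ k ∈ Ico (n - m) n, permP k (CyclesLE m) := by
  have hreindex : ∑ k ∈ Ico (n - m) n, permP k (CyclesLE m)
      = ∑ i ∈ range m, permP (n - (i + 1)) (CyclesLE m) :=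
    sum_nbij' (fun k => n - 1 - k) (fun i => n - (i + 1))
      (fun k hk => mem_range.mpr (by rw [mem_Ico] at hk; omega))
      (fun i hi => mem_Ico.mpr (by rw [mem_range] at hi; omega))
      (fun k hk => by rw [mem_Ico] at hk; omega)
      (fun i hi => by rw [mem_range] at hi; omega)
      (fun k hk => by rw [mem_Ico] at hk; rw [show n - (n - 1 - k + 1) = k by omega])
  rw [hreindex, permP_cyclesLE, cyclesLECount_eq_sum (by omega), Nat.cast_sum, sum_div, mul_sum]
  refine sum_congr rfl fun i hi => ?_
  have hi : i < m := mem_range.mp hi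
  have hfact : (n - (i + 1)).factorial * (n - 1).descFactorial i * n = n.factorial := by
    rw [show n - (i + 1) = n - 1 - i by omega, Nat.factorial_mul_descFactorial (by omega),
      mul_comm, Nat.mul_factorial_pred (by omega)]
  have hn : (n : ℝ) ≠ 0 := by exact_mod_cast (show n ≠ 0 by omega)
  have hdesc : ((n - 1).descFactorial i : ℝ) ≠ 0 := by
    exact_mod_cast (Nat.descFactorial_pos.mpr (show i ≤ n - 1 by omega)).ne'
  rw [permP_cyclesLE, ← hfact]
  field_simp
  push_cast
  ring

open intervalIntegral MeasureTheory

structure IsDickman (ρ : ℝ → ℝ) : Prop where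
  continuousOn : ContinuousOn ρ (Set.Ici 0)
  eq_one : ∀ u : ℝ, 0 ≤ u → u ≤ 1 → ρ u = 1
  hasDerivAt : ∀ u : ℝ, 1 < u → HasDerivAt ρ (-ρ (u - 1) / u) u

namespace IsDickman

variable {ρ : ℝ → ℝ}

theorem integral_zero_one (hρ : IsDickman ρ) : ∫ t in (0 : ℝ)..1, ρ t = 1 := by
  rw [integral_congr (g := fun _ => (1 : ℝ)) fun t ht => by
    rw [Set.uIcc_of_le zero_le_one] at ht
    exact hρ.eq_one t ht.1 ht.2]
  simp

theorem mul_eq_integral (hρ : IsDickman ρ) {u : ℝ} (hu : 1 ≤ u) :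
    u * ρ u = ∫ t in (u - 1)..u, ρ t := by
  -- A continuous extension of `ρ` to `ℝ` has a primitive differentiable everywhere, also at `0`.
  set ρ' : ℝ → ℝ := fun t => ρ (max t 0)
  have hρ'c : Continuous ρ' :=
    hρ.continuousOn.comp_continuous (continuous_id.max continuous_const) fun t => le_max_right t 0
  set F : ℝ → ℝ := fun v => ∫ t in (0 : ℝ)..v, ρ' t
  have hF : ∀ v, HasDerivAt (fun w => F w - F (w - 1)) (ρ' v - ρ' (v - 1)) v := fun v =>
    (hρ'c.integral_hasStrictDerivAt 0 v).hasDerivAt.sub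
      (HasDerivAt.comp_sub_const v 1 (hρ'c.integral_hasStrictDerivAt 0 (v - 1)).hasDerivAt)
  have hFρ : ∀ v, 1 ≤ v → F v - F (v - 1) = ∫ t in (v - 1)..v, ρ t := fun v hv => by
    rw [integral_interval_sub_left (hρ'c.intervalIntegrable _ _) (hρ'c.intervalIntegrable _ _)]
    refine integral_congr fun t ht => ?_
    rw [Set.uIcc_of_le (by linarith)] at ht
    simp only [ρ', max_eq_left (show 0 ≤ t by linarith [ht.1])]
  set g : ℝ → ℝ := fun v => v * ρ v - (F v - F (v - 1))
  have hg1 : g 1 = 0 := by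
    have h : F 1 - F 0 = 1 := by simpa [hρ.integral_zero_one] using hFρ 1 le_rfl
    simp only [g, sub_self, h, hρ.eq_one 1 zero_le_one le_rfl]
    norm_num
  suffices g u = 0 by simpa [g, hFρ u hu, sub_eq_zero] using this
  rcases hu.eq_or_lt with rfl | hu
  · exact hg1
  have hgc : ContinuousOn g (Set.Icc 1 u) :=
    (continuousOn_id.mul (hρ.continuousOn.mono fun x hx => zero_le_one.trans hx.1)).sub
      (continuous_iff_continuousAt.2 fun v => (hF v).continuousAt).continuousOn
  have hg' : ∀ v ∈ Set.Ioo 1 u, HasDerivAt g 0 v := by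
    intro v hv
    have hρ'v : ∀ t, 0 ≤ t → ρ' t = ρ t := fun t ht => by simp only [ρ', max_eq_left ht]
    have hv0 : v ≠ 0 := (show 0 < v by linarith [hv.1]).ne'
    refine (((hasDerivAt_id' v).mul (hρ.hasDerivAt v hv.1)).sub (hF v)).congr_deriv ?_
    rw [hρ'v v (by linarith [hv.1]), hρ'v (v - 1) (by linarith [hv.1])]
    field_simp
    ring
  obtain ⟨c, -, hc⟩ := exists_hasDerivAt_eq_slope g (fun _ => 0) hu hgc hg'
  rw [hg1, sub_zero, eq_comm, div_eq_zero_iff] at hc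
  exact hc.resolve_right (by linarith)

theorem nonneg_of_antitoneOn (hρ : IsDickman ρ) {b : ℝ} (hanti : AntitoneOn ρ (Set.Icc 0 b))
    {u : ℝ} (hu : u ∈ Set.Icc 0 b) : 0 ≤ ρ u := by
  rcases le_or_gt u 1 with hu1 | hu1
  · rw [hρ.eq_one u hu.1 hu1]
    exact zero_le_one
  have hsub : Set.Icc (u - 1) u ⊆ Set.Icc 0 b := fun t ht => ⟨by linarith [ht.1], ht.2.trans hu.2⟩
  have hle : ρ u ≤ ∫ t in (u - 1)..u, ρ t := by
    simpa using integral_mono_on (by linarith) intervalIntegrable_const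
      ((hρ.continuousOn.mono fun t ht => (hsub (by rwa [Set.uIcc_of_le (by linarith)] at ht)).1)
        |>.intervalIntegrable (μ := volume))
      fun t ht => hanti (hsub ht) hu ht.2
  rw [← hρ.mul_eq_integral hu1.le] at hle
  nlinarith

theorem antitoneOn_Icc_add_one (hρ : IsDickman ρ) {b : ℝ} (hb : 0 ≤ b)
    (hanti : AntitoneOn ρ (Set.Icc 0 b)) : AntitoneOn ρ (Set.Icc 0 (b + 1)) := by
  have hanti₁ : AntitoneOn ρ (Set.Icc 1 (b + 1)) := by
    refine antitoneOn_of_hasDerivWithinAt_nonpos (f' := fun x => -ρ (x - 1) / x) (convex_Icc _ _)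
      (hρ.continuousOn.mono fun x hx => zero_le_one.trans hx.1) (fun x hx => ?_) (fun x hx => ?_)
    all_goals rw [interior_Icc] at hx
    · exact (hρ.hasDerivAt x hx.1).hasDerivWithinAt
    · have := hρ.nonneg_of_antitoneOn hanti (u := x - 1) ⟨by linarith [hx.1], by linarith [hx.2]⟩
      exact div_nonpos_of_nonpos_of_nonneg (neg_nonpos.2 this) (by linarith [hx.1])
  have hmax : ∀ x, 0 ≤ x → ρ x = ρ (max x 1) := fun x hx => by
    rcases le_total x 1 with h | h
    · rw [max_eq_right h, hρ.eq_one x hx h, hρ.eq_one 1 zero_le_one le_rfl]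
    · rw [max_eq_left h]
  intro x hx y hy hxy
  rw [hmax x hx.1, hmax y hy.1]
  exact hanti₁ ⟨le_max_right _ _, max_le hx.2 (by linarith)⟩
    ⟨le_max_right _ _, max_le hy.2 (by linarith)⟩ (max_le_max hxy le_rfl)

theorem antitoneOn (hρ : IsDickman ρ) : AntitoneOn ρ (Set.Ici 0) := by
  have h : ∀ k : ℕ, AntitoneOn ρ (Set.Icc 0 k) := by
    intro k
    induction k with
    | zero => simp
    | succ k ih => exact_mod_cast hρ.antitoneOn_Icc_add_one k.cast_nonneg ih
  intro x hx y hy hxy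
  exact h ⌈y⌉₊ ⟨hx, hxy.trans (Nat.le_ceil y)⟩ ⟨hx.trans hxy, Nat.le_ceil y⟩ hxy

theorem antitoneOn_comp_div (hρ : IsDickman ρ) {c : ℝ} (hc : 0 < c) :
    AntitoneOn (fun s => ρ (s / c)) (Set.Ici 0) := fun _ hx _ hy hxy =>
  hρ.antitoneOn (div_nonneg hx hc.le) (div_nonneg hy hc.le) (div_le_div_of_nonneg_right hxy hc.le)

theorem mul_eq_integral_comp_div (hρ : IsDickman ρ) {c x : ℝ} (hc : 0 < c) (hx : c ≤ x) :
    x * ρ (x / c) = ∫ s in (x - c)..x, ρ (s / c) := by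
  rw [integral_comp_div _ hc.ne', smul_eq_mul, sub_div, div_self hc.ne',
    ← hρ.mul_eq_integral ((one_le_div hc).2 hx)]
  field_simp

theorem le_permP_cyclesLE (hρ : IsDickman ρ) {m : ℕ} (hm : 1 ≤ m) (n : ℕ) :
    ρ (n / m) ≤ permP n (CyclesLE m) := by
  induction n using Nat.strong_induction_on with
  | _ n ih =>
  have hm' : (0 : ℝ) < m := by exact_mod_cast hm
  rcases le_or_gt n m with hnm | hmn
  · rw [permP_cyclesLE, cyclesLECount_of_le hnm, div_self (by positivity),
      ← hρ.eq_one 0 le_rfl zero_le_one]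
    exact hρ.antitoneOn (Set.mem_Ici.mpr le_rfl) (Set.mem_Ici.mpr (by positivity)) (by positivity)
  refine le_of_mul_le_mul_left ?_ (Nat.cast_pos.mpr (by omega : 0 < n))
  calc (n : ℝ) * ρ (n / m) = ∫ s in ((n - m : ℕ) : ℝ)..(n : ℝ), ρ (s / m) := by
        rw [hρ.mul_eq_integral_comp_div hm' (by exact_mod_cast hmn.le), Nat.cast_sub hmn.le]
    _ ≤ ∑ k ∈ Ico (n - m) n, ρ (k / m) :=
        AntitoneOn.integral_le_sum_Ico (Nat.sub_le n m)
          ((hρ.antitoneOn_comp_div hm').mono fun s hs => (Nat.cast_nonneg _).trans hs.1)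
    _ ≤ ∑ k ∈ Ico (n - m) n, permP k (CyclesLE m) :=
        sum_le_sum fun k hk => ih k (mem_Ico.mp hk).2
    _ = n * permP n (CyclesLE m) := (mul_permP_cyclesLE_eq_sum hmn).symm

theorem permP_cyclesLE_le (hρ : IsDickman ρ) (m n : ℕ) :
    permP n (CyclesLE m) ≤ ρ ((n + 1) / (m + 1)) := by
  induction n using Nat.strong_induction_on with
  | _ n ih =>
  have hm' : (0 : ℝ) < m + 1 := by positivity
  rcases le_or_gt n m with hnm | hmn
  · rw [permP_cyclesLE, cyclesLECount_of_le hnm, div_self (by positivity),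
      hρ.eq_one _ (by positivity) ((div_le_one hm').2 (by exact_mod_cast Nat.succ_le_succ hnm))]
  refine le_of_mul_le_mul_left ?_ (Nat.cast_pos.mpr (by omega : 0 < n))
  have hsum : ∑ k ∈ Ico (n - m) (n + 1), ρ (((k + 1 : ℕ) : ℝ) / (m + 1))
      ≤ (n + 1) * ρ ((n + 1) / (m + 1)) := by
    rw [hρ.mul_eq_integral_comp_div hm' (by exact_mod_cast Nat.succ_le_succ hmn.le)]
    convert AntitoneOn.sum_le_integral_Ico ((Nat.sub_le n m).trans (Nat.le_add_right n 1))
      ((hρ.antitoneOn_comp_div hm').mono fun s hs => (Nat.cast_nonneg _).trans hs.1) using 2 <;>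
    push_cast [Nat.cast_sub hmn.le] <;> ring
  rw [sum_Ico_succ_top (Nat.sub_le n m)] at hsum
  push_cast at hsum
  calc (n : ℝ) * permP n (CyclesLE m) = ∑ k ∈ Ico (n - m) n, permP k (CyclesLE m) :=
        mul_permP_cyclesLE_eq_sum hmn
    _ ≤ ∑ k ∈ Ico (n - m) n, ρ ((k + 1) / (m + 1)) :=
        sum_le_sum fun k hk => ih k (mem_Ico.mp hk).2
    _ ≤ n * ρ ((n + 1) / (m + 1)) := by linarith

end IsDickman

theorem dickman_bounds_general (rho : ℝ → ℝ) (hcont : ContinuousOn rho (Set.Ici 0))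
    (hone : ∀ u : ℝ, 0 ≤ u → u ≤ 1 → rho u = 1)
    (hder : ∀ u : ℝ, 1 < u → HasDerivAt rho (-rho (u - 1) / u) u)
    (n m : ℕ) (hm : 1 ≤ m) :
    rho ((n : ℝ) / m)
        ≤ permP n (fun σ => cycleCountIn σ (Finset.Icc (m + 1) n) = 0) ∧
      permP n (fun σ => cycleCountIn σ (Finset.Icc (m + 1) n) = 0)
        ≤ rho (((n : ℝ) + 1) / ((m : ℝ) + 1)) := by
  have hρ : IsDickman rho := ⟨hcont, hone, hder⟩
  have hevent : (fun σ => cycleCountIn σ (Finset.Icc (m + 1) n) = 0) = CyclesLE m :=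
    funext fun σ => propext (cycleCountIn_Icc_eq_zero_iff σ)
  rw [hevent]
  exact ⟨hρ.le_permP_cyclesLE hm n, hρ.permP_cyclesLE_le m n⟩

/-- **Dickman-function bounds for `ν(n,m)`.** If `ρ` is continuous on `[0,∞)`,
equals `1` on `[0,1]`, and satisfies `u ρ'(u) = -ρ(u-1)` for `u > 1` (expressed
via `HasDerivAt`), then for all `1 ≤ m ≤ n`,
`ρ(n/m) ≤ ν(n,m) ≤ ρ((n+1)/(m+1))`. -/
theorem dickman_bounds (rho : ℝ → ℝ) (hcont : ContinuousOn rho (Set.Ici 0))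
    (hone : ∀ u : ℝ, 0 ≤ u → u ≤ 1 → rho u = 1)
    (hder : ∀ u : ℝ, 1 < u → HasDerivAt rho (-rho (u - 1) / u) u)
    (n m : ℕ) (hm : 1 ≤ m) (hmn : m ≤ n) :
    rho ((n : ℝ) / m)
        ≤ permP n (fun σ => cycleCountIn σ (Finset.Icc (m + 1) n) = 0) ∧
      permP n (fun σ => cycleCountIn σ (Finset.Icc (m + 1) n) = 0)
        ≤ rho (((n : ℝ) + 1) / ((m : ℝ) + 1)) :=
  dickman_bounds_general rho hcont hone hder n m hm
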